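/- arXiv:math/0009198 — 3 statements merged into one kernel-verified Lean document; each statement's English description precedes it below -/
import Mathlib

section
/- For N ≥ 2, 0 ≤ i ≤ l ≤ k and 0 ≤ i' ≤ l' ≤ k, the doubly refined partial characters satisfy χ^N_k[i,l;i',l'](q,z₁,z₂) = q^{(N−1)(l'−i')} · (z₁z₂)^{l'−i'−l+i} · χ^N_k[i',l';i,l](q^{−1}, z₁, q^{N−1}z₂), as an identity of Laurent polynomials in q, z₁, z₂. -/
/-- `(α,β,γ)` is an admissible Verlinde triple of level `k`. -/
def IsAdm (k α β γ : ℕ) : Prop :=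
  ∃ x y z : ℕ, x + y + z ≤ k ∧ α = x + y ∧ β = y + z ∧ γ = x + z
/-- `x(α,β,γ) = (α+γ-β)/2` (exact on admissible triples). -/
def xA (α β γ : ℕ) : ℕ := (α + γ - β) / 2
/-- `y(α,β,γ) = (α+β-γ)/2` (exact on admissible triples). -/
def yA (α β γ : ℕ) : ℕ := (α + β - γ) / 2
/-- `z(α,β,γ) = (β+γ-α)/2` (exact on admissible triples). -/
def zA (α β γ : ℕ) : ℕ := (β + γ - α) / 2
/-- `α, β : ℕ → ℕ` represent a Verlinde path `(α₁,…,α_N; β₁,…,β_{N-1})` of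
length `N`, level `k` and weight `l`: the values at `0` are dummy zeros, and
the conventions `β_N = α_N`, `α_i = β_i = 0` for `i > N` are imposed. -/
def IsVerPath (k l N : ℕ) (α β : ℕ → ℕ) : Prop :=
  α 0 = 0 ∧ β 0 = 0 ∧ α 1 = l ∧ β N = α N ∧
  (∀ i, N < i → α i = 0) ∧ (∀ i, N < i → β i = 0) ∧
  (∀ i, 1 ≤ i → IsAdm k (α i) (β i) (α (i + 1)))
/-- The `a`-entries associated to a Verlinde path:
`a_{i-1} = y(α_i, β_i, α_{i+1})`. -/
def iotaA (α β : ℕ → ℕ) (i : ℕ) : ℕ := yA (α (i + 1)) (β (i + 1)) (α (i + 2))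

/-- The `b`-entries associated to a Verlinde path:
`b_i = z(α_i,β_i,α_{i+1}) - (y(α_{i+1},β_{i+1},α_{i+2}) - x(α_i,β_i,α_{i+1}))⁺`
for `i ≥ 1`, with the dummy value `b_0 = 0`. -/
def iotaB (α β : ℕ → ℕ) (i : ℕ) : ℕ :=
  if i = 0 then 0 else
    zA (α i) (β i) (α (i + 1)) -
      (yA (α (i + 1)) (β (i + 1)) (α (i + 2)) - xA (α i) (β i) (α (i + 1)))

/-- The energy grading `e(α;β) = Σ_{i=1}^{N-1} i (a_i + b_i)`. -/
def eGr (N : ℕ) (α β : ℕ → ℕ) : ℕ :=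
  ∑ i ∈ Finset.Icc 1 (N - 1), i * (iotaA α β i + iotaB α β i)

/-- The grading `s₁(α;β) = Σ_{i=1}^{N-1} b_i`. -/
def s1Gr (N : ℕ) (α β : ℕ → ℕ) : ℕ :=
  ∑ i ∈ Finset.Icc 1 (N - 1), iotaB α β i

/-- The grading `s₂(α;β) = a_0 + Σ_{i=1}^{N-1} (a_i + b_i)`. -/
def s2Gr (N : ℕ) (α β : ℕ → ℕ) : ℕ :=
  iotaA α β 0 + ∑ i ∈ Finset.Icc 1 (N - 1), (iotaA α β i + iotaB α β i)

open Classical in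
/-- The doubly refined partial character `χ^N_k[i,l;i',l'](q,z₁,z₂)`, an
element of the ring of Laurent polynomials in `q = X(1,0,0)`, `z₁ = X(0,1,0)`,
`z₂ = X(0,0,1)`, realized as the group algebra `ℤ[ℤ³]`: the sum of
`q^e z₁^{s₁} z₂^{s₂}` over all Verlinde paths of length `N`, level `k`,
weight `l` with `α₁+β₁-α₂ = 2i`, `α_N = l'` and `α_N+β_{N-1}-α_{N-1} = 2i'`. -/
noncomputable def chiBoth (k N i l i' l' : ℕ) : AddMonoidAlgebra ℤ (ℤ × ℤ × ℤ) :=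
  ∑ᶠ (p : (ℕ → ℕ) × (ℕ → ℕ))
      (_ : IsVerPath k l N p.1 p.2 ∧ p.1 1 + p.2 1 = p.1 2 + 2 * i ∧
           p.1 N = l' ∧ p.1 N + p.2 (N - 1) = p.1 (N - 1) + 2 * i'),
    AddMonoidAlgebra.single
      ((eGr N p.1 p.2 : ℤ), (s1Gr N p.1 p.2 : ℤ), (s2Gr N p.1 p.2 : ℤ)) 1

/-- The substitution `q ↦ q⁻¹`, `z₂ ↦ q^{N-1} z₂` on Laurent polynomials in
`q,z₁,z₂`: on exponents `(a,b,c) ↦ (-a+(N-1)c, b, c)`. -/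
noncomputable def subInvQ (N : ℕ) (p : AddMonoidAlgebra ℤ (ℤ × ℤ × ℤ)) :
    AddMonoidAlgebra ℤ (ℤ × ℤ × ℤ) :=
  AddMonoidAlgebra.ofCoeff
    (Finsupp.mapDomain (fun v => (-v.1 + ((N : ℤ) - 1) * v.2.2, v.2.1, v.2.2)) p.coeff)

/-!
Reading a path backwards, `(α₁,…,α_N; β₁,…,β_{N-1}) ↦ (α_N,…,α₁; β_{N-1},…,β₁)`, is an
involution between the paths counted by `χ^N_k[i',l';i,l]` and by `χ^N_k[i,l;i',l']`. It reverses
every admissible triple, so it fixes the coordinate `x` and swaps `y` and `z`. Because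
`x_m + z_m = α_{m+1} = x_{m+1} + y_{m+1}`, the summand
`a_m + b_m = min (y_{m+1} + z_m) α_{m+1}` is symmetric in `y` and `z`: the reversed path carries
the same summands in the reflected positions `m ↦ N-1-m`, except that the last one changes from
`α_N` to `α₁`. Reflecting positions turns `e = Σ m (a_m + b_m)` into
`(N-1) Σ (a_m + b_m) - e` up to boundary terms, and telescoping the same relations gives
`Σ a_m = Σ z_m + x₁`, which determines how `s₁ = Σ (a_m + b_m) - Σ a_m` changes. The boundary
triples then contribute exactly the monomial prefactor.
-/

open Finset

section Admissible

variable {k a b c : ℕ}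

lemma IsAdm.spec (h : IsAdm k a b c) :
    xA a b c + yA a b c = a ∧ yA a b c + zA a b c = b ∧ xA a b c + zA a b c = c := by
  obtain ⟨x, y, z, -, rfl, rfl, rfl⟩ := h
  simp only [xA, yA, zA]
  omega

lemma IsAdm.le (h : IsAdm k a b c) : a ≤ k := by
  obtain ⟨x, y, z, h, rfl, -, -⟩ := h
  omega

lemma IsAdm.reverse (h : IsAdm k a b c) : IsAdm k c b a := by
  obtain ⟨x, y, z, h, rfl, rfl, rfl⟩ := h
  exact ⟨x, z, y, by omega, by omega, by omega, by omega⟩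

lemma yA_reverse (a b c : ℕ) : yA c b a = zA a b c := by
  rw [yA, zA, add_comm]

lemma zA_reverse (a b c : ℕ) : zA c b a = yA a b c := by
  rw [zA, yA, add_comm]

end Admissible

def tripleX (p : (ℕ → ℕ) × (ℕ → ℕ)) (j : ℕ) : ℕ := xA (p.1 j) (p.2 j) (p.1 (j + 1))

def tripleY (p : (ℕ → ℕ) × (ℕ → ℕ)) (j : ℕ) : ℕ := yA (p.1 j) (p.2 j) (p.1 (j + 1))

def tripleZ (p : (ℕ → ℕ) × (ℕ → ℕ)) (j : ℕ) : ℕ := zA (p.1 j) (p.2 j) (p.1 (j + 1))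

section Triples

variable {k l N : ℕ} {p : (ℕ → ℕ) × (ℕ → ℕ)}

lemma iotaA_eq_tripleY (p : (ℕ → ℕ) × (ℕ → ℕ)) (m : ℕ) :
    iotaA p.1 p.2 m = tripleY p (m + 1) := rfl

lemma iotaB_eq_of_ne_zero {m : ℕ} (hm : m ≠ 0) :
    iotaB p.1 p.2 m = tripleZ p m - (tripleY p (m + 1) - tripleX p m) :=
  if_neg hm

lemma IsVerPath.triple_spec (hp : IsVerPath k l N p.1 p.2) {j : ℕ} (hj : 1 ≤ j) :
    tripleX p j + tripleY p j = p.1 j ∧ tripleY p j + tripleZ p j = p.2 j ∧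
      tripleX p j + tripleZ p j = p.1 (j + 1) :=
  (hp.2.2.2.2.2.2 j hj).spec

lemma IsVerPath.tripleX_top (hp : IsVerPath k l N p.1 p.2) : tripleX p N = 0 := by
  obtain ⟨-, -, -, hβN, hαt, -, -⟩ := hp
  rw [tripleX, hβN, hαt (N + 1) N.lt_add_one, xA]
  omega

lemma IsVerPath.tripleY_top (hp : IsVerPath k l N p.1 p.2) : tripleY p N = p.1 N := by
  obtain ⟨-, -, -, hβN, hαt, -, -⟩ := hp
  rw [tripleY, hβN, hαt (N + 1) N.lt_add_one, yA]
  omega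

lemma IsVerPath.iotaA_add_iotaB (hp : IsVerPath k l N p.1 p.2) {m : ℕ} (hm : 1 ≤ m) :
    iotaA p.1 p.2 m + iotaB p.1 p.2 m = min (tripleY p (m + 1) + tripleZ p m) (p.1 (m + 1)) := by
  have hm' := hp.triple_spec hm
  have hm₁ := hp.triple_spec (j := m + 1) (by omega)
  rw [iotaA_eq_tripleY, iotaB_eq_of_ne_zero (by omega)]
  omega

lemma IsVerPath.sum_iotaA_add_tripleX (hp : IsVerPath k l N p.1 p.2) (n : ℕ) :
    ∑ m ∈ Icc 1 n, iotaA p.1 p.2 m + tripleX p (n + 1) =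
      ∑ m ∈ Icc 1 n, tripleZ p m + tripleX p 1 := by
  induction n with
  | zero => simp
  | succ n ih =>
    have hn := hp.triple_spec (j := n + 1) (by omega)
    have hn₁ := hp.triple_spec (j := n + 1 + 1) (by omega)
    rw [sum_Icc_succ_top (by omega), sum_Icc_succ_top (by omega), iotaA_eq_tripleY]
    omega

end Triples

def pathRev (N : ℕ) (p : (ℕ → ℕ) × (ℕ → ℕ)) : (ℕ → ℕ) × (ℕ → ℕ) :=
  (fun j => p.1 (N + 1 - j), fun j => if j = 0 then 0 else if j = N then p.1 1 else p.2 (N - j))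

section Reversal

variable {k l N j : ℕ} {p : (ℕ → ℕ) × (ℕ → ℕ)}

lemma pathRev_fst (N : ℕ) (p : (ℕ → ℕ) × (ℕ → ℕ)) (j : ℕ) :
    (pathRev N p).1 j = p.1 (N + 1 - j) := rfl

lemma pathRev_snd_of_lt (hj : 1 ≤ j) (hjN : j < N) : (pathRev N p).2 j = p.2 (N - j) := by
  simp only [pathRev, if_neg (by omega : j ≠ 0), if_neg hjN.ne]

lemma tripleY_pathRev (hj : 1 ≤ j) (hjN : j < N) : tripleY (pathRev N p) j = tripleZ p (N - j) := by
  simp only [tripleY, tripleZ, pathRev_fst, pathRev_snd_of_lt hj hjN, Nat.add_sub_add_right,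
    Nat.sub_add_comm hjN.le, yA_reverse]

lemma tripleZ_pathRev (hj : 1 ≤ j) (hjN : j < N) : tripleZ (pathRev N p) j = tripleY p (N - j) := by
  simp only [tripleY, tripleZ, pathRev_fst, pathRev_snd_of_lt hj hjN, Nat.add_sub_add_right,
    Nat.sub_add_comm hjN.le, zA_reverse]

lemma IsVerPath.reverse (hN : 0 < N) (hp : IsVerPath k l N p.1 p.2) :
    IsVerPath k (p.1 N) N (pathRev N p).1 (pathRev N p).2 := by
  obtain ⟨hα0, hβ0, -, -, hαt, -, hadm⟩ := hp
  refine ⟨hαt _ N.lt_add_one, rfl, by simp [pathRev_fst], ?_, fun j hj => ?_, fun j hj => ?_,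
    fun j hj => ?_⟩
  · simp [pathRev, hN.ne']
  · rw [pathRev_fst, Nat.sub_eq_zero_of_le (by omega), hα0]
  · simp [pathRev, hj.ne', Nat.sub_eq_zero_of_le hj.le, hβ0]
  · rcases lt_trichotomy j N with hjN | rfl | hjN
    · have h := (hadm (N - j) (by omega)).reverse
      rwa [pathRev_fst, pathRev_fst, pathRev_snd_of_lt hj hjN, Nat.add_sub_add_right,
        Nat.sub_add_comm hjN.le]
    · simp only [pathRev, Nat.add_sub_cancel_left, Nat.sub_self, hα0, if_neg hN.ne', if_true]
      exact ⟨0, p.1 1, 0, by simpa using (hadm 1 le_rfl).le, by simp, by simp, rfl⟩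
    · simp only [pathRev, if_neg (by omega : j ≠ 0), if_neg hjN.ne', Nat.sub_eq_zero_of_le hjN.le,
        Nat.sub_eq_zero_of_le (by omega : N + 1 ≤ j),
        Nat.sub_eq_zero_of_le (by omega : N + 1 ≤ j + 1), hα0, hβ0]
      exact ⟨0, 0, 0, by simp, rfl, rfl, rfl⟩

lemma IsVerPath.pathRev_pathRev (hp : IsVerPath k l N p.1 p.2) : pathRev N (pathRev N p) = p := by
  obtain ⟨hα0, hβ0, -, hβN, hαt, hβt, -⟩ := hp
  ext j
  · rcases le_or_gt j (N + 1) with hj | hj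
    · rw [pathRev_fst, pathRev_fst, Nat.sub_sub_self hj]
    · rw [pathRev_fst, pathRev_fst, Nat.sub_eq_zero_of_le hj.le, Nat.sub_zero, hαt _ N.lt_add_one,
        hαt _ (by omega)]
  · simp only [pathRev]
    split_ifs with h₀ hN h₁ h₂
    · rw [h₀, hβ0]
    · rw [hN, Nat.add_sub_cancel, hβN]
    · rw [hβt j (by omega)]
    · omega
    · rw [Nat.sub_sub_self (by omega)]

end Reversal

lemma Finset.sum_Icc_one_reflect {M : Type*} [AddCommMonoid M] (f : ℕ → M) (n : ℕ) :
    ∑ j ∈ Icc 1 n, f (n + 1 - j) = ∑ j ∈ Icc 1 n, f j := by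
  rw [← Ico_add_one_right_eq_Icc, sum_Ico_reflect f 1 (by omega)]
  simp

lemma Finset.sum_Icc_one_sub_one {M : Type*} [AddCommMonoid M] {N : ℕ} (hN : 2 ≤ N) (f : ℕ → M) :
    ∑ m ∈ Icc 1 (N - 1), f m = ∑ m ∈ Icc 1 (N - 2), f m + f (N - 1) := by
  rw [show N - 1 = N - 2 + 1 by omega, sum_Icc_succ_top (by omega)]

section Gradings

variable {k l N : ℕ} {p : (ℕ → ℕ) × (ℕ → ℕ)}

lemma IsVerPath.iotaA_add_iotaB_top (hN : 2 ≤ N) (hp : IsVerPath k l N p.1 p.2) :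
    iotaA p.1 p.2 (N - 1) + iotaB p.1 p.2 (N - 1) = p.1 N := by
  rw [hp.iotaA_add_iotaB (by omega), Nat.sub_add_cancel (by omega), hp.tripleY_top]
  omega

lemma IsVerPath.iotaA_add_iotaB_pathRev (hp : IsVerPath k l N p.1 p.2) {m : ℕ} (hm : 1 ≤ m)
    (hmN : m + 2 ≤ N) :
    iotaA (pathRev N p).1 (pathRev N p).2 m + iotaB (pathRev N p).1 (pathRev N p).2 m =
      iotaA p.1 p.2 (N - 1 - m) + iotaB p.1 p.2 (N - 1 - m) := by
  rw [(hp.reverse (by omega)).iotaA_add_iotaB hm, hp.iotaA_add_iotaB (by omega),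
    tripleY_pathRev (by omega) (by omega), tripleZ_pathRev hm (by omega), pathRev_fst,
    show N - (m + 1) = N - 1 - m by omega, show N - 1 - m + 1 = N - m by omega,
    show N + 1 - (m + 1) = N - m by omega, add_comm]

lemma IsVerPath.sum_pathRev_reflect (hN : 2 ≤ N) (hp : IsVerPath k l N p.1 p.2)
    (g : ℕ → ℕ → ℕ) :
    ∑ m ∈ Icc 1 (N - 2),
        g m (iotaA (pathRev N p).1 (pathRev N p).2 m + iotaB (pathRev N p).1 (pathRev N p).2 m) =
      ∑ m ∈ Icc 1 (N - 2), g (N - 1 - m) (iotaA p.1 p.2 m + iotaB p.1 p.2 m) := by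
  rw [← sum_Icc_one_reflect]
  refine sum_congr rfl fun m hm => ?_
  rw [mem_Icc] at hm
  rw [hp.iotaA_add_iotaB_pathRev (by omega) (by omega), show N - 2 + 1 - m = N - 1 - m by omega,
    show N - 1 - (N - 1 - m) = m by omega]

lemma IsVerPath.sum_iotaA_add_iotaB (hN : 2 ≤ N) (hp : IsVerPath k l N p.1 p.2) :
    ∑ m ∈ Icc 1 (N - 1), (iotaA p.1 p.2 m + iotaB p.1 p.2 m) =
      ∑ m ∈ Icc 1 (N - 2), (iotaA p.1 p.2 m + iotaB p.1 p.2 m) + p.1 N := by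
  rw [sum_Icc_one_sub_one hN, hp.iotaA_add_iotaB_top hN]

lemma IsVerPath.sum_iotaA_add_iotaB_pathRev (hN : 2 ≤ N) (hp : IsVerPath k l N p.1 p.2) :
    ∑ m ∈ Icc 1 (N - 1),
        (iotaA (pathRev N p).1 (pathRev N p).2 m + iotaB (pathRev N p).1 (pathRev N p).2 m) =
      ∑ m ∈ Icc 1 (N - 2), (iotaA p.1 p.2 m + iotaB p.1 p.2 m) + p.1 1 := by
  rw [(hp.reverse (by omega)).sum_iotaA_add_iotaB hN, hp.sum_pathRev_reflect hN fun _ c => c,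
    pathRev_fst, Nat.add_sub_cancel_left]

lemma IsVerPath.sum_iotaA (hN : 2 ≤ N) (hp : IsVerPath k l N p.1 p.2) :
    ∑ m ∈ Icc 1 (N - 1), iotaA p.1 p.2 m =
      ∑ m ∈ Icc 1 (N - 2), tripleZ p m + tripleZ p (N - 1) + tripleX p 1 := by
  have h := hp.sum_iotaA_add_tripleX (N - 1)
  rw [Nat.sub_add_cancel (by omega), hp.tripleX_top, sum_Icc_one_sub_one hN (tripleZ p)] at h
  omega

lemma IsVerPath.sum_iotaA_pathRev (hN : 2 ≤ N) (hp : IsVerPath k l N p.1 p.2) :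
    ∑ m ∈ Icc 1 (N - 1), iotaA (pathRev N p).1 (pathRev N p).2 m =
      ∑ m ∈ Icc 1 (N - 2), tripleZ p m + p.1 1 := by
  rw [sum_Icc_one_sub_one hN, iotaA_eq_tripleY, Nat.sub_add_cancel (by omega),
    (hp.reverse (by omega)).tripleY_top, pathRev_fst, Nat.add_sub_cancel_left,
    ← sum_Icc_one_reflect]
  congr 1
  refine sum_congr rfl fun m hm => ?_
  rw [mem_Icc] at hm
  rw [iotaA_eq_tripleY, tripleY_pathRev (by omega) (by omega)]
  congr 1
  omega

lemma iotaA_pathRev_zero (hN : 1 < N) :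
    iotaA (pathRev N p).1 (pathRev N p).2 0 = tripleZ p (N - 1) := by
  rw [iotaA_eq_tripleY, tripleY_pathRev le_rfl (by omega)]

lemma IsVerPath.s2Gr_pathRev (hN : 2 ≤ N) (hp : IsVerPath k l N p.1 p.2) :
    s2Gr N (pathRev N p).1 (pathRev N p).2 + p.1 N + iotaA p.1 p.2 0 =
      s2Gr N p.1 p.2 + p.1 1 + tripleZ p (N - 1) := by
  rw [s2Gr, s2Gr, hp.sum_iotaA_add_iotaB_pathRev hN, hp.sum_iotaA_add_iotaB hN,
    iotaA_pathRev_zero hN]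
  omega

lemma IsVerPath.s1Gr_pathRev (hN : 2 ≤ N) (hp : IsVerPath k l N p.1 p.2) :
    s1Gr N (pathRev N p).1 (pathRev N p).2 + p.1 N + iotaA p.1 p.2 0 =
      s1Gr N p.1 p.2 + p.1 1 + tripleZ p (N - 1) := by
  have h := sum_add_distrib (s := Icc 1 (N - 1)) (f := iotaA p.1 p.2) (g := iotaB p.1 p.2)
  have h' := sum_add_distrib (s := Icc 1 (N - 1)) (f := iotaA (pathRev N p).1 (pathRev N p).2)
    (g := iotaB (pathRev N p).1 (pathRev N p).2)
  have h₁ := hp.triple_spec le_rfl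
  rw [hp.sum_iotaA_add_iotaB hN, hp.sum_iotaA hN] at h
  rw [hp.sum_iotaA_add_iotaB_pathRev hN, hp.sum_iotaA_pathRev hN] at h'
  rw [s1Gr, s1Gr, iotaA_eq_tripleY, zero_add]
  omega

lemma IsVerPath.eGr_pathRev (hN : 2 ≤ N) (hp : IsVerPath k l N p.1 p.2) :
    eGr N (pathRev N p).1 (pathRev N p).2 + eGr N p.1 p.2 + (N - 1) * iotaA p.1 p.2 0 =
      (N - 1) * (p.1 1 + s2Gr N p.1 p.2) := by
  have hweights : ∑ m ∈ Icc 1 (N - 2), (N - 1 - m) * (iotaA p.1 p.2 m + iotaB p.1 p.2 m) +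
      ∑ m ∈ Icc 1 (N - 2), m * (iotaA p.1 p.2 m + iotaB p.1 p.2 m) =
      (N - 1) * ∑ m ∈ Icc 1 (N - 2), (iotaA p.1 p.2 m + iotaB p.1 p.2 m) := by
    rw [← sum_add_distrib, mul_sum]
    refine sum_congr rfl fun m hm => ?_
    rw [mem_Icc] at hm
    rw [← add_mul, Nat.sub_add_cancel (by omega)]
  rw [eGr, eGr, s2Gr, sum_Icc_one_sub_one hN, sum_Icc_one_sub_one hN,
    hp.sum_pathRev_reflect hN fun m c => m * c, (hp.reverse (by omega)).iotaA_add_iotaB_top hN,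
    hp.iotaA_add_iotaB_top hN, hp.sum_iotaA_add_iotaB hN, pathRev_fst, Nat.add_sub_cancel_left]
  linear_combination hweights

end Gradings

def PathSet (k N i l i' l' : ℕ) : Set ((ℕ → ℕ) × (ℕ → ℕ)) :=
  {p | IsVerPath k l N p.1 p.2 ∧ p.1 1 + p.2 1 = p.1 2 + 2 * i ∧
       p.1 N = l' ∧ p.1 N + p.2 (N - 1) = p.1 (N - 1) + 2 * i'}

def pathWeight (N : ℕ) (p : (ℕ → ℕ) × (ℕ → ℕ)) : ℤ × ℤ × ℤ :=
  ((eGr N p.1 p.2 : ℤ), (s1Gr N p.1 p.2 : ℤ), (s2Gr N p.1 p.2 : ℤ))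

def weightReflect (N : ℕ) (v : ℤ × ℤ × ℤ) : ℤ × ℤ × ℤ :=
  (-v.1 + ((N : ℤ) - 1) * v.2.2, v.2.1, v.2.2)

lemma weightReflect_involutive (N : ℕ) : Function.Involutive (weightReflect N) := by
  rintro ⟨a, b, c⟩
  simp [weightReflect]

lemma chiBoth_eq_finsum (k N i l i' l' : ℕ) :
    chiBoth k N i l i' l' =
      ∑ᶠ p ∈ PathSet k N i l i' l', AddMonoidAlgebra.single (pathWeight N p) 1 := rfl

lemma subInvQ_eq_mapDomain (N : ℕ) (x : AddMonoidAlgebra ℤ (ℤ × ℤ × ℤ)) :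
    subInvQ N x = AddMonoidAlgebra.mapDomain (weightReflect N) x := rfl

section PathSet

variable {k N i l i' l' : ℕ} {p : (ℕ → ℕ) × (ℕ → ℕ)}

lemma pathRev_mem_pathSet (hN : 2 ≤ N) (hp : p ∈ PathSet k N i' l' i l) :
    pathRev N p ∈ PathSet k N i l i' l' := by
  obtain ⟨hpath, hfirst, hlN, hlast⟩ := hp
  have hrev := hpath.reverse (by omega)
  rw [hlN] at hrev
  refine ⟨hrev, ?_, ?_, ?_⟩
  · rwa [pathRev_fst, pathRev_fst, pathRev_snd_of_lt le_rfl (by omega), Nat.add_sub_cancel,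
      show N + 1 - 2 = N - 1 by omega]
  · rw [pathRev_fst, Nat.add_sub_cancel_left, hpath.2.2.1]
  · rwa [pathRev_fst, pathRev_fst, pathRev_snd_of_lt (by omega) (by omega),
      Nat.add_sub_cancel_left, show N - (N - 1) = 1 by omega, show N + 1 - (N - 1) = 2 by omega]

lemma bijOn_pathRev (hN : 2 ≤ N) :
    Set.BijOn (pathRev N) (PathSet k N i' l' i l) (PathSet k N i l i' l') :=
  Set.InvOn.bijOn ⟨fun _ hp => hp.1.pathRev_pathRev, fun _ hp => hp.1.pathRev_pathRev⟩
    (fun _ hp => pathRev_mem_pathSet hN hp) (fun _ hp => pathRev_mem_pathSet hN hp)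

lemma pathWeight_pathRev (hN : 2 ≤ N) (hp : p ∈ PathSet k N i' l' i l) :
    pathWeight N (pathRev N p) =
      ((((N : ℤ) - 1) * ((l' : ℤ) - (i' : ℤ)) : ℤ),
        ((l' : ℤ) - (i' : ℤ) - (l : ℤ) + (i : ℤ), (l' : ℤ) - (i' : ℤ) - (l : ℤ) + (i : ℤ))) +
      weightReflect N (pathWeight N p) := by
  obtain ⟨hpath, hfirst, hlN, hlast⟩ := hp
  have ha₀ : iotaA p.1 p.2 0 = i' := by
    change (p.1 1 + p.2 1 - p.1 2) / 2 = i'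
    omega
  have hz : tripleZ p (N - 1) = i := by
    rw [tripleZ, zA, Nat.sub_add_cancel (by omega)]
    omega
  have he := hpath.eGr_pathRev hN
  have hs₁ := hpath.s1Gr_pathRev hN
  have hs₂ := hpath.s2Gr_pathRev hN
  rw [ha₀, hz, hlN, hpath.2.2.1] at *
  simp only [pathWeight, weightReflect, Prod.mk_add_mk, Prod.mk.injEq]
  zify [(by omega : 1 ≤ N)] at he
  refine ⟨by linear_combination he, by omega, by omega⟩

end PathSet

lemma AddMonoidAlgebra.single_mul_mapDomain_finsum_mem {R G H α : Type*} [Semiring R]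
    [AddGroup H] {f : G → H} (hf : Function.Injective f) (h : H) (F : α → AddMonoidAlgebra R G)
    (s : Set α) :
    single h 1 * mapDomain f (∑ᶠ a ∈ s, F a) = ∑ᶠ a ∈ s, single h 1 * mapDomain f (F a) := by
  let g : AddMonoidAlgebra R G →+ AddMonoidAlgebra R H :=
    (AddMonoidHom.mulLeft (single h 1)).comp ⟨⟨mapDomain f, mapDomain_zero f⟩, mapDomain_add f⟩
  have hg : Function.Injective g := by
    intro x y hxy
    apply mapDomain_injective hf
    simpa [g, ← mul_assoc, single_mul_single, ← one_def] using congrArg (single (-h) 1 * ·) hxy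
  change g _ = ∑ᶠ a ∈ s, g (F a)
  simp only [g.map_finsum_of_injective hg]

theorem stmt_12_general (k N : ℕ) (hN : 2 ≤ N) (i l i' l' : ℕ) :
    chiBoth k N i l i' l' =
      AddMonoidAlgebra.single
        ((((N : ℤ) - 1) * ((l' : ℤ) - (i' : ℤ)) : ℤ),
         ((l' : ℤ) - (i' : ℤ) - (l : ℤ) + (i : ℤ), (l' : ℤ) - (i' : ℤ) - (l : ℤ) + (i : ℤ)))
        (1 : ℤ) *
      subInvQ N (chiBoth k N i' l' i l) := by
  rw [chiBoth_eq_finsum, chiBoth_eq_finsum, subInvQ_eq_mapDomain,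
    AddMonoidAlgebra.single_mul_mapDomain_finsum_mem (weightReflect_involutive N).injective]
  refine (finsum_mem_eq_of_bijOn (pathRev N) (bijOn_pathRev hN) fun p hp => ?_).symm
  rw [AddMonoidAlgebra.mapDomain_single, AddMonoidAlgebra.single_mul_single, mul_one,
    pathWeight_pathRev hN hp]

/-- The symmetry
`χ^N_k[i,l;i',l'](q,z₁,z₂) = q^{(N-1)(l'-i')} (z₁z₂)^{l'-i'-l+i}
χ^N_k[i',l';i,l](q⁻¹,z₁,q^{N-1}z₂)`. -/
theorem stmt_12 (k N : ℕ) (hk : 1 ≤ k) (hN : 2 ≤ N) (i l i' l' : ℕ)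
    (h1 : i ≤ l) (h2 : l ≤ k) (h3 : i' ≤ l') (h4 : l' ≤ k) :
    chiBoth k N i l i' l' =
      AddMonoidAlgebra.single
        ((((N : ℤ) - 1) * ((l' : ℤ) - (i' : ℤ)) : ℤ),
         ((l' : ℤ) - (i' : ℤ) - (l : ℤ) + (i : ℤ), (l' : ℤ) - (i' : ℤ) - (l : ℤ) + (i : ℤ)))
        (1 : ℤ) *
      subInvQ N (chiBoth k N i' l' i l) :=
  stmt_12_general k N hN i l i' l'
end

section
/- Let A be an associative unital ring, V a left A-module, u ∈ V, and E, F, H ∈ A with EF − FE = H, HE = EH and HF = FH. If E^a·u = 0, then E^{a+b}F^b·u = 0 for every integer b ≥ 0. -/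
lemma LM1_comm {A : Type*} [Ring A] (E F H : A) (hEF : E * F - F * E = H)
    (hHE : H * E = E * H) :
    ∀ n : ℕ, E ^ (n + 1) * F = F * E ^ (n + 1) + (n + 1) • (H * E ^ n) := by
  intro n
  induction n with
  | zero =>
    simp only [zero_add, pow_one, pow_zero, mul_one, one_smul]
    rw [← hEF]; abel
  | succ n ih =>
    have h0 : E ^ (n + 2) * F = E * (E ^ (n + 1) * F) := by
      rw [pow_succ' E (n + 1), mul_assoc]
    rw [h0, ih, mul_add, ← mul_assoc]
    have hEF' : E * F = F * E + H := by rw [← hEF]; abel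
    rw [hEF', mul_smul_comm]
    have hEH : E * (H * E ^ n) = H * E ^ (n + 1) := by
      rw [← mul_assoc, ← hHE, mul_assoc, ← pow_succ']
    rw [hEH, add_mul, mul_assoc, ← pow_succ' E (n + 1),
      succ_nsmul (H * E ^ (n + 1)) (n + 1)]
    abel

/-- Lemma LM1 (abstract form): if `EF - FE = H` with `H` commuting with `E`
and `F`, and `E^a•u = 0`, then `E^(a+b) F^b•u = 0` for every `b ≥ 0`. -/
theorem stmt_14 {A V : Type*} [Ring A] [AddCommGroup V] [Module A V]
    (u : V) (E F H : A) (hEF : E * F - F * E = H)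
    (hHE : H * E = E * H) (hHF : H * F = F * H)
    (a : ℕ) (h : E ^ a • u = 0) :
    ∀ b : ℕ, (E ^ (a + b) * F ^ b) • u = 0 := by
  intro b
  induction b with
  | zero => simpa using h
  | succ b ih =>
    have key := LM1_comm E F H hEF hHE (a + b)
    have h1 : E ^ (a + (b + 1)) * F ^ (b + 1)
        = (E ^ (a + b + 1) * F) * F ^ b := by
      rw [show a + (b + 1) = a + b + 1 from rfl, pow_succ' F b, ← mul_assoc]
    rw [h1, key, add_mul, add_smul]
    have h2 : (F * E ^ (a + b + 1) * F ^ b) • u = 0 := by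
      have : F * E ^ (a + b + 1) * F ^ b = F * (E * (E ^ (a + b) * F ^ b)) := by
        rw [pow_succ' E (a + b)]
        simp only [mul_assoc]
      rw [this, mul_smul, mul_smul, ih, smul_zero, smul_zero]
    have h3 : (((a + b + 1) • (H * E ^ (a + b))) * F ^ b) • u = 0 := by
      rw [smul_mul_assoc, smul_assoc, mul_assoc, mul_smul, ih, smul_zero,
        smul_zero]
    rw [h2, h3, add_zero]
end

section
/- Let K ≥ 0 be an integer and let P_K be the set of all subsets J of {1,…,2K+1} with |J| = K+1. Define the square matrix M over ℚ, with rows and columns indexed by P_K, by M_{J,I} = 1 if the complement of I in {1,…,2K+1} is contained in J, and M_{J,I} = 0 otherwise. Then M is invertible. -/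
open Finset

-- count of (K+1)-subsets of Fin (2K+1) containing A
lemma superset_count (K : ℕ) (A : Finset (Fin (2 * K + 1))) :
    (Finset.univ.filter
        (fun J : {s : Finset (Fin (2 * K + 1)) // s.card = K + 1} =>
          A ⊆ (J : Finset (Fin (2 * K + 1))))).card
      = (Aᶜ.card).choose K := by
  rw [← Finset.card_powersetCard K Aᶜ]
  refine Finset.card_bij (fun J _ => (J : Finset (Fin (2 * K + 1)))ᶜ) ?_ ?_ ?_
  · intro J hJ
    simp only [mem_filter, mem_univ, true_and] at hJ
    rw [mem_powersetCard]
    refine ⟨compl_subset_compl.mpr hJ, ?_⟩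
    rw [card_compl, J.2, Fintype.card_fin]
    omega
  · intro J₁ _ J₂ _ h
    have : (J₁ : Finset (Fin (2 * K + 1))) = J₂ := by
      have := congrArg (·ᶜ) h
      simpa using this
    exact Subtype.ext this
  · intro S hS
    rw [mem_powersetCard] at hS
    refine ⟨⟨Sᶜ, ?_⟩, ?_, ?_⟩
    · rw [card_compl, hS.2, Fintype.card_fin]; omega
    · simp only [mem_filter, mem_univ, true_and]
      exact fun x hx => by
        simp only [Finset.mem_compl]
        intro hxS
        exact absurd (hS.1 hxS) (by simp [hx])
    · simp

lemma count_eq (K : ℕ) (I I' : {s : Finset (Fin (2 * K + 1)) // s.card = K + 1})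
    (superset_count : ∀ A : Finset (Fin (2 * K + 1)),
      (Finset.univ.filter
        (fun J : {s : Finset (Fin (2 * K + 1)) // s.card = K + 1} =>
          A ⊆ (J : Finset (Fin (2 * K + 1))))).card = (Aᶜ.card).choose K) :
    (univ.filter (fun J : {s : Finset (Fin (2 * K + 1)) // s.card = K + 1} =>
        (↑I : Finset (Fin (2 * K + 1)))ᶜ ⊆ ↑J ∧ (↑I' : Finset (Fin (2 * K + 1)))ᶜ ⊆ ↑J)).card
      = (univ.filter (fun T : Finset (Fin (2 * K + 1)) =>
          T.card + 1 = K ∧ T ⊆ (↑I : Finset (Fin (2 * K + 1)))ᶜ ∧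
            T ⊆ (↑I' : Finset (Fin (2 * K + 1)))ᶜ)).card
        + (if I = I' then 1 else 0) := by
  have hI := I.2
  have hI' := I'.2
  set c := ((↑I : Finset (Fin (2 * K + 1))) ∩ ↑I').card with hc
  have hunion : ((↑I : Finset (Fin (2 * K + 1))) ∪ ↑I').card + c = 2 * K + 2 := by
    rw [hc, card_union_add_card_inter, hI, hI']; ring
  have hle : ((↑I : Finset (Fin (2 * K + 1))) ∪ ↑I').card ≤ 2 * K + 1 := by
    have := card_le_univ ((↑I : Finset (Fin (2 * K + 1))) ∪ ↑I')
    simpa using this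
  have hc1 : 1 ≤ c := by omega
  have hc2 : c ≤ K + 1 := by
    have h3 : ((↑I : Finset (Fin (2 * K + 1))) ∩ ↑I').card
        ≤ (↑I : Finset (Fin (2 * K + 1))).card := card_le_card inter_subset_left
    omega
  have hL : (univ.filter (fun J : {s : Finset (Fin (2 * K + 1)) // s.card = K + 1} =>
        (↑I : Finset (Fin (2 * K + 1)))ᶜ ⊆ ↑J ∧ (↑I' : Finset (Fin (2 * K + 1)))ᶜ ⊆ ↑J)).card
      = c.choose K := by
    rw [filter_congr (q := fun J : {s : Finset (Fin (2 * K + 1)) // s.card = K + 1} =>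
        ((↑I : Finset (Fin (2 * K + 1)))ᶜ ∪ (↑I' : Finset (Fin (2 * K + 1)))ᶜ) ⊆ ↑J)
        (fun J _ => (union_subset_iff).symm), superset_count]
    congr 1
    rw [compl_union, compl_compl, compl_compl]
  have hinter : ((↑I : Finset (Fin (2 * K + 1)))ᶜ ∩ (↑I' : Finset (Fin (2 * K + 1)))ᶜ).card
      = c - 1 := by
    rw [← compl_union, card_compl, Fintype.card_fin]
    omega
  have hT : (univ.filter (fun T : Finset (Fin (2 * K + 1)) =>
          T.card + 1 = K ∧ T ⊆ (↑I : Finset (Fin (2 * K + 1)))ᶜ ∧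
            T ⊆ (↑I' : Finset (Fin (2 * K + 1)))ᶜ)).card
      = if K = 0 then 0 else (c - 1).choose (K - 1) := by
    rcases K with _ | k
    · simp
    · rw [if_neg (Nat.succ_ne_zero k)]
      have : (univ.filter (fun T : Finset (Fin (2 * (k+1) + 1)) =>
          T.card + 1 = k + 1 ∧ T ⊆ (↑I : Finset (Fin (2 * (k+1) + 1)))ᶜ ∧
            T ⊆ (↑I' : Finset (Fin (2 * (k+1) + 1)))ᶜ))
          = ((↑I : Finset (Fin (2 * (k+1) + 1)))ᶜ ∩ (↑I' : Finset (Fin (2 * (k+1) + 1)))ᶜ).powersetCard k := by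
        ext T
        simp only [mem_filter, mem_univ, true_and, mem_powersetCard, subset_inter_iff]
        exact ⟨fun h => ⟨⟨h.2.1, h.2.2⟩, by omega⟩, fun h => ⟨by omega, h.1.1, h.1.2⟩⟩
      rw [this, card_powersetCard, hinter, Nat.add_sub_cancel]
  have hdelta : I = I' ↔ c = K + 1 := by
    constructor
    · intro h; rw [hc, h, inter_self, hI']
    · intro h
      have h1 : (↑I : Finset (Fin (2 * K + 1))) ∩ ↑I' = ↑I :=
        eq_of_subset_of_card_le inter_subset_left (by rw [hc] at h; omega)
      have h2 : (↑I : Finset (Fin (2 * K + 1))) ∩ ↑I' = ↑I' :=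
        eq_of_subset_of_card_le inter_subset_right (by rw [hc] at h; omega)
      exact Subtype.ext (h1 ▸ h2)
  rw [hL, hT]
  obtain ⟨d, hd⟩ : ∃ d, c = d + 1 := ⟨c - 1, by omega⟩
  rw [hd] at hdelta hc2 ⊢
  rw [Nat.add_sub_cancel]
  rcases K with _ | k
  · have hd : d = 0 := by omega
    have : I = I' := hdelta.mpr (by omega)
    simp [this, hd]
  · rw [if_neg (Nat.succ_ne_zero k)]
    rw [Nat.succ_sub_one, Nat.choose_succ_succ']
    by_cases h : I = I'
    · have hdk : d = k + 1 := by have := hdelta.mp h; omega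
      rw [if_pos h, hdk, Nat.choose_self]
    · have hdk : d < k + 1 := by
        have : ¬ d + 1 = k + 1 + 1 := fun hh => h (hdelta.mpr hh)
        omega
      rw [if_neg h, Nat.choose_eq_zero_of_lt hdk]

set_option maxHeartbeats 3200000 in
lemma core_zero (K : ℕ)
    (v : {s : Finset (Fin (2 * K + 1)) // s.card = K + 1} → ℚ)
    (hv : ∀ J : {s : Finset (Fin (2 * K + 1)) // s.card = K + 1},
      ∑ I : {s : Finset (Fin (2 * K + 1)) // s.card = K + 1},
        (if (↑I : Finset (Fin (2 * K + 1)))ᶜ ⊆ ↑J then v I else 0) = 0) :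
    v = 0 := by
  classical
  set TK : Finset (Finset (Fin (2 * K + 1))) :=
    univ.filter (fun T : Finset (Fin (2 * K + 1)) => T.card + 1 = K) with hTK
  have E1 : ∀ I I' : {s : Finset (Fin (2 * K + 1)) // s.card = K + 1},
      (∑ J : {s : Finset (Fin (2 * K + 1)) // s.card = K + 1},
        (if (↑I : Finset (Fin (2 * K + 1)))ᶜ ⊆ ↑J then v I else 0) *
          (if (↑I' : Finset (Fin (2 * K + 1)))ᶜ ⊆ ↑J then v I' else 0))
      = (∑ T ∈ TK, (if T ⊆ (↑I : Finset (Fin (2 * K + 1)))ᶜ then v I else 0) *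
          (if T ⊆ (↑I' : Finset (Fin (2 * K + 1)))ᶜ then v I' else 0))
        + (if I = I' then v I * v I' else 0) := by
    intro I I'
    simp_rw [ite_zero_mul_ite_zero]
    rw [← Finset.sum_filter, Finset.sum_const, nsmul_eq_mul]
    rw [← Finset.sum_filter, Finset.sum_const, nsmul_eq_mul]
    rw [hTK, Finset.filter_filter]
    have hn := count_eq K I I' (superset_count K)
    have hcast : ((univ.filter (fun J : {s : Finset (Fin (2 * K + 1)) // s.card = K + 1} =>
        (↑I : Finset (Fin (2 * K + 1)))ᶜ ⊆ ↑J ∧ (↑I' : Finset (Fin (2 * K + 1)))ᶜ ⊆ ↑J)).card : ℚ)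
        = ((univ.filter (fun T : Finset (Fin (2 * K + 1)) =>
          T.card + 1 = K ∧ T ⊆ (↑I : Finset (Fin (2 * K + 1)))ᶜ ∧
            T ⊆ (↑I' : Finset (Fin (2 * K + 1)))ᶜ)).card : ℚ)
          + (if I = I' then 1 else 0) := by
      rw [hn]
      push_cast
      rfl
    rw [hcast, add_mul]
    congr 1
    split_ifs <;> ring

  have step1 : (∑ J : {s : Finset (Fin (2 * K + 1)) // s.card = K + 1},
            (∑ I : {s : Finset (Fin (2 * K + 1)) // s.card = K + 1},
              (if (↑I : Finset (Fin (2 * K + 1)))ᶜ ⊆ ↑J then v I else 0)) ^ 2)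
        = ∑ J : {s : Finset (Fin (2 * K + 1)) // s.card = K + 1},
            ∑ I : {s : Finset (Fin (2 * K + 1)) // s.card = K + 1},
              ∑ I' : {s : Finset (Fin (2 * K + 1)) // s.card = K + 1},
              (if (↑I : Finset (Fin (2 * K + 1)))ᶜ ⊆ ↑J then v I else 0) *
                (if (↑I' : Finset (Fin (2 * K + 1)))ᶜ ⊆ ↑J then v I' else 0) :=
          Finset.sum_congr rfl (fun J _ => by rw [sq, Finset.sum_mul_sum])
  have step3 : ∀ I : {s : Finset (Fin (2 * K + 1)) // s.card = K + 1},
        (∑ J : {s : Finset (Fin (2 * K + 1)) // s.card = K + 1},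
              ∑ I' : {s : Finset (Fin (2 * K + 1)) // s.card = K + 1},
              (if (↑I : Finset (Fin (2 * K + 1)))ᶜ ⊆ ↑J then v I else 0) *
                (if (↑I' : Finset (Fin (2 * K + 1)))ᶜ ⊆ ↑J then v I' else 0))
        = (∑ T ∈ TK, (if T ⊆ (↑I : Finset (Fin (2 * K + 1)))ᶜ then v I else 0) *
              (∑ I' : {s : Finset (Fin (2 * K + 1)) // s.card = K + 1},
                (if T ⊆ (↑I' : Finset (Fin (2 * K + 1)))ᶜ then v I' else 0)))
              + v I * v I := by
    intro I
    rw [Finset.sum_comm]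
    rw [show (∑ I' : {s : Finset (Fin (2 * K + 1)) // s.card = K + 1},
                  ∑ J : {s : Finset (Fin (2 * K + 1)) // s.card = K + 1},
                  (if (↑I : Finset (Fin (2 * K + 1)))ᶜ ⊆ ↑J then v I else 0) *
                    (if (↑I' : Finset (Fin (2 * K + 1)))ᶜ ⊆ ↑J then v I' else 0))
              = ∑ I' : {s : Finset (Fin (2 * K + 1)) // s.card = K + 1},
                  ((∑ T ∈ TK, (if T ⊆ (↑I : Finset (Fin (2 * K + 1)))ᶜ then v I else 0) *
                    (if T ⊆ (↑I' : Finset (Fin (2 * K + 1)))ᶜ then v I' else 0))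
                  + (if I = I' then v I * v I' else 0)) from
                Finset.sum_congr rfl (fun I' _ => E1 I I')]
    rw [Finset.sum_add_distrib]
    congr 1
    · rw [Finset.sum_comm]
      exact Finset.sum_congr rfl (fun T _ => (Finset.mul_sum _ _ _).symm)
    · rw [Finset.sum_ite_eq]
      simp

  have key : (∑ J : {s : Finset (Fin (2 * K + 1)) // s.card = K + 1},
        (∑ I : {s : Finset (Fin (2 * K + 1)) // s.card = K + 1},
          (if (↑I : Finset (Fin (2 * K + 1)))ᶜ ⊆ ↑J then v I else 0)) ^ 2)
      = (∑ T ∈ TK, (∑ I : {s : Finset (Fin (2 * K + 1)) // s.card = K + 1},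
          (if T ⊆ (↑I : Finset (Fin (2 * K + 1)))ᶜ then v I else 0)) ^ 2)
        + ∑ I : {s : Finset (Fin (2 * K + 1)) // s.card = K + 1}, (v I) ^ 2 := by
    rw [step1, Finset.sum_comm, Finset.sum_congr rfl (fun I _ => step3 I),
      Finset.sum_add_distrib]
    congr 1
    · rw [Finset.sum_comm]
      refine Finset.sum_congr rfl (fun T _ => ?_)
      rw [← Finset.sum_mul, sq]
    · exact Finset.sum_congr rfl (fun I _ => (sq (v I)).symm)
  have hzero : (∑ J : {s : Finset (Fin (2 * K + 1)) // s.card = K + 1},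
        (∑ I : {s : Finset (Fin (2 * K + 1)) // s.card = K + 1},
          (if (↑I : Finset (Fin (2 * K + 1)))ᶜ ⊆ ↑J then v I else 0)) ^ 2) = 0 := by
    simp only [hv]
    simp
  rw [hzero] at key
  have hA : (0 : ℚ) ≤ ∑ T ∈ TK, (∑ I : {s : Finset (Fin (2 * K + 1)) // s.card = K + 1},
      (if T ⊆ (↑I : Finset (Fin (2 * K + 1)))ᶜ then v I else 0)) ^ 2 :=
    Finset.sum_nonneg (fun T _ => sq_nonneg _)
  have hB : ∑ I : {s : Finset (Fin (2 * K + 1)) // s.card = K + 1}, (v I) ^ 2 = 0 := by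
    have hBnn : (0 : ℚ) ≤ ∑ I : {s : Finset (Fin (2 * K + 1)) // s.card = K + 1}, (v I) ^ 2 :=
      Finset.sum_nonneg (fun I _ => sq_nonneg _)
    linarith
  funext I
  have h1 := (Finset.sum_eq_zero_iff_of_nonneg (fun I _ => sq_nonneg (v I))).mp hB I (mem_univ I)
  have h2 := sq_eq_zero_iff.mp h1
  simpa using h2

set_option maxHeartbeats 3200000 in
/-- Let `P_K` be the set of `(K+1)`-element subsets of `{1,…,2K+1}`. The
matrix `M` over `ℚ` indexed by `P_K` with `M_{J,I} = 1` if `Iᶜ ⊆ J` and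
`M_{J,I} = 0` otherwise is invertible. -/
theorem stmt_18 (K : ℕ) :
    IsUnit (Matrix.of fun J I : {s : Finset (Fin (2 * K + 1)) // s.card = K + 1} =>
      if ((I : Finset (Fin (2 * K + 1)))ᶜ ⊆ (J : Finset (Fin (2 * K + 1))))
      then (1 : ℚ) else 0) := by
  rw [← Matrix.mulVec_injective_iff_isUnit]
  have hker : ∀ v : {s : Finset (Fin (2 * K + 1)) // s.card = K + 1} → ℚ,
      (Matrix.of fun J I : {s : Finset (Fin (2 * K + 1)) // s.card = K + 1} =>
        if ((I : Finset (Fin (2 * K + 1)))ᶜ ⊆ (J : Finset (Fin (2 * K + 1))))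
        then (1 : ℚ) else 0).mulVec v = 0 → v = 0 := by
    intro v hv0
    apply core_zero
    intro J
    have h := congrFun hv0 J
    simpa only [Matrix.mulVec, dotProduct, Matrix.of_apply, boole_mul, Pi.zero_apply] using h
  intro a b hab
  have h := hker (a - b) (by rw [Matrix.mulVec_sub, hab, sub_self])
  exact sub_eq_zero.mp h
end
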